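/- arXiv:1810.00467 — 9 statements merged into one kernel-verified Lean document; each statement's English description precedes it below -/
import Mathlib

section
/- In the rooted join construction, the numbers of dominating sets satisfy d_*(G, r) = ∏_{i=1}^{k} d₀(Gᵢ, rᵢ), d₀(G, r) = ∏_{i=1}^{k} d(Gᵢ) − ∏_{i=1}^{k} d₀(Gᵢ, rᵢ), and d(G) = d₀(G, r) + ∏_{i=1}^{k} (d(Gᵢ) + d_*(Gᵢ, rᵢ)); in particular d₀(G, r) + d_*(G, r) = ∏_{i=1}^{k} d(Gᵢ). -/
/-- A finite set of vertices is dominating if every vertex lies in it or is adjacent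
to one of its elements. -/
def FinsetDominating {V : Type*} (H : SimpleGraph V) (s : Finset V) : Prop :=
  ∀ w : V, w ∈ s ∨ ∃ u ∈ s, H.Adj w u

/-- `numDom H` is the number of dominating sets of `H`. -/
noncomputable def numDom {V : Type*} (H : SimpleGraph V) : ℕ :=
  Nat.card {s : Finset V // FinsetDominating H s}

/-- `numDom0 H v` is the number of dominating sets of `H` not containing `v`. -/
noncomputable def numDom0 {V : Type*} (H : SimpleGraph V) (v : V) : ℕ :=
  Nat.card {s : Finset V // FinsetDominating H s ∧ v ∉ s}

/-- A finite set of vertices dominates everything except `v`: it contains neither `v`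
nor a neighbour of `v`, and every vertex other than `v` lies in it or is adjacent to
one of its elements. -/
def FinsetDomStar {V : Type*} (H : SimpleGraph V) (v : V) (s : Finset V) : Prop :=
  v ∉ s ∧ (∀ u : V, H.Adj v u → u ∉ s) ∧
  ∀ w : V, w ≠ v → (w ∈ s ∨ ∃ u ∈ s, H.Adj w u)

/-- `numDomStar H v` is the number of sets dominating everything except `v`. -/
noncomputable def numDomStar {V : Type*} (H : SimpleGraph V) (v : V) : ℕ :=
  Nat.card {s : Finset V // FinsetDomStar H v s}

/-- The adjacency relation of the rooted join: a new root (the vertex `none`) is joined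
to the roots of the (disjoint) graphs `Gs i`, whose edges are kept. -/
def joinRel {k : ℕ} {V : Fin k → Type*} (Gs : ∀ i, SimpleGraph (V i)) (roots : ∀ i, V i) :
    Option (Σ i, V i) → Option (Σ i, V i) → Prop := fun x y =>
  (∃ (i : Fin k) (u w : V i), x = some ⟨i, u⟩ ∧ y = some ⟨i, w⟩ ∧ (Gs i).Adj u w) ∨
  (∃ i : Fin k, x = none ∧ y = some ⟨i, roots i⟩) ∨
  (∃ i : Fin k, x = some ⟨i, roots i⟩ ∧ y = none)

section Aux
variable {k : ℕ} {V : Fin k → Type*}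

lemma some_mk_inj {i : Fin k} {a b : V i}
    (h : (some ⟨i, a⟩ : Option (Σ i, V i)) = some ⟨i, b⟩) : a = b := by
  simpa using h

noncomputable def comp (s : Finset (Option (Σ i, V i))) (i : Fin k) : Finset (V i) :=
  s.preimage (fun u => (some ⟨i, u⟩ : Option (Σ i, V i)))
    (fun a _ b _ h => some_mk_inj h)

@[simp] lemma mem_comp {s : Finset (Option (Σ i, V i))} {i : Fin k} {u : V i} :
    u ∈ comp s i ↔ some ⟨i, u⟩ ∈ s := Finset.mem_preimage

open Classical in
noncomputable def glueO (b : Bool) (t : ∀ i, Finset (V i)) : Finset (Option (Σ i, V i)) :=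
  (Finset.univ.sigma t).image some ∪ (if b then {none} else ∅)

@[simp] lemma none_mem_glueO {b : Bool} {t : ∀ i, Finset (V i)} :
    (none : Option (Σ i, V i)) ∈ glueO b t ↔ b = true := by
  unfold glueO; cases b <;> simp

@[simp] lemma some_mem_glueO {b : Bool} {t : ∀ i, Finset (V i)} {i : Fin k} {u : V i} :
    (some ⟨i, u⟩ : Option (Σ i, V i)) ∈ glueO b t ↔ u ∈ t i := by
  unfold glueO; cases b <;> simp [Finset.mem_sigma]

lemma comp_glueO (b : Bool) (t : ∀ i, Finset (V i)) (i : Fin k) :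
    comp (glueO b t) i = t i := by
  ext u; simp

lemma master [∀ i, Fintype (V i)] (b : Bool) (P : ∀ i, Finset (V i) → Prop) :
    Nat.card {s : Finset (Option (Σ i, V i)) // (none ∈ s ↔ b = true) ∧ ∀ i, P i (comp s i)} =
    ∏ i, Nat.card {t : Finset (V i) // P i t} := by
  rw [← Nat.card_pi]
  refine Nat.card_congr ⟨fun s i => ⟨comp s.1 i, s.2.2 i⟩,
    fun f => ⟨glueO b (fun i => (f i).1), by simp [comp_glueO], fun i => by
      rw [comp_glueO]; exact (f i).2⟩, fun s => ?_, fun f => ?_⟩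
  · ext x
    · cases x with
      | none => simp [s.2.1]
      | some a => obtain ⟨i, u⟩ := a; simp
  · funext i
    ext u
    simp [comp_glueO]

lemma card_partition {α : Type*} [Finite α] (p q : α → Prop) :
    Nat.card {x // p x} = Nat.card {x // p x ∧ q x} + Nat.card {x // p x ∧ ¬ q x} := by
  classical
  rw [← Nat.card_sum]
  refine Nat.card_congr ⟨fun x => if h : q x.1 then .inl ⟨x.1, x.2, h⟩ else .inr ⟨x.1, x.2, h⟩,
    fun y => match y with | .inl z => ⟨z.1, z.2.1⟩ | .inr z => ⟨z.1, z.2.1⟩,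
    fun x => ?_, fun y => ?_⟩
  · by_cases h : q x.1 <;> simp [h]
  · rcases y with z | z
    · simp [z.2.2]
    · simp [z.2.2]

/-- Per-component count of sets dominating everything except possibly `v`. -/
lemma card_almost {W : Type*} [Fintype W] (H : SimpleGraph W) (v : W) :
    Nat.card {t : Finset W // ∀ w, w ≠ v → (w ∈ t ∨ ∃ u ∈ t, H.Adj w u)} =
      numDom H + numDomStar H v := by
  rw [card_partition _ (fun t => v ∈ t ∨ ∃ u ∈ t, H.Adj v u)]
  congr 1
  · refine Nat.card_congr (Equiv.subtypeEquivRight fun t => ?_)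
    constructor
    · rintro ⟨ha, hq⟩ w
      by_cases hw : w = v
      · subst hw; exact hq
      · exact ha w hw
    · intro hd
      exact ⟨fun w _ => hd w, hd v⟩
  · refine Nat.card_congr (Equiv.subtypeEquivRight fun t => ?_)
    constructor
    · rintro ⟨ha, hq⟩
      push_neg at hq
      exact ⟨hq.1, fun u hadj hu => hq.2 u hu hadj, ha⟩
    · rintro ⟨h0, h1, h2⟩
      refine ⟨h2, ?_⟩
      push_neg
      exact ⟨h0, fun u hu hadj => h1 u hadj hu⟩

end Aux

section Adj
variable {k : ℕ} {V : Fin k → Type*}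
  (Gs : ∀ i, SimpleGraph (V i)) (roots : ∀ i, V i)
  (G : SimpleGraph (Option (Σ i, V i)))
  (hG : ∀ x y, G.Adj x y ↔ joinRel Gs roots x y)
include hG

lemma adj_none_iff (x : Option (Σ i, V i)) :
    G.Adj none x ↔ ∃ i, x = some ⟨i, roots i⟩ := by
  rw [hG]; unfold joinRel; simp

lemma adj_some_iff (i : Fin k) (u : V i) (x : Option (Σ i, V i)) :
    G.Adj (some ⟨i, u⟩) x ↔
      (∃ w : V i, x = some ⟨i, w⟩ ∧ (Gs i).Adj u w) ∨ (u = roots i ∧ x = none) := by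
  rw [hG]; unfold joinRel
  constructor
  · rintro (⟨i', u', w', h1, h2, h3⟩ | ⟨i', h1, h2⟩ | ⟨i', h1, h2⟩)
    · simp only [Option.some.injEq, Sigma.mk.inj_iff] at h1
      obtain ⟨rfl, h1⟩ := h1
      obtain rfl := eq_of_heq h1
      exact .inl ⟨w', h2, h3⟩
    · simp at h1
    · simp only [Option.some.injEq, Sigma.mk.inj_iff] at h1
      obtain ⟨rfl, h1⟩ := h1
      obtain rfl := eq_of_heq h1
      exact .inr ⟨rfl, h2⟩
  · rintro (⟨w, rfl, h⟩ | ⟨rfl, rfl⟩)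
    · exact .inl ⟨i, u, w, rfl, rfl, h⟩
    · exact .inr (.inr ⟨i, rfl, rfl⟩)

/-- If `none ∉ s`, a `some` vertex is dominated by `s` iff it is dominated within its
component. -/
lemma dominated_some_iff (s : Finset (Option (Σ i, V i))) (hnone : none ∉ s)
    (i : Fin k) (u : V i) :
    (some ⟨i, u⟩ ∈ s ∨ ∃ x ∈ s, G.Adj (some ⟨i, u⟩) x) ↔
    (u ∈ comp s i ∨ ∃ w ∈ comp s i, (Gs i).Adj u w) := by
  simp only [mem_comp]
  constructor
  · rintro (h | ⟨x, hx, hadj⟩)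
    · exact .inl h
    · rw [adj_some_iff Gs roots G hG] at hadj
      rcases hadj with ⟨w, rfl, h⟩ | ⟨rfl, rfl⟩
      · exact .inr ⟨w, hx, h⟩
      · exact absurd hx hnone
  · rintro (h | ⟨w, hw, h⟩)
    · exact .inl h
    · exact .inr ⟨some ⟨i, w⟩, hw, (adj_some_iff Gs roots G hG i u _).mpr (.inl ⟨w, rfl, h⟩)⟩

lemma iff_domStar (s : Finset (Option (Σ i, V i))) :
    FinsetDomStar G none s ↔
      (none ∈ s ↔ (false : Bool) = true) ∧
      ∀ i, FinsetDominating (Gs i) (comp s i) ∧ roots i ∉ comp s i := by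
  constructor
  · rintro ⟨h0, h1n, h2⟩
    refine ⟨by simpa using h0, fun i => ⟨fun u => ?_, fun hr => h1n _
      ((adj_none_iff Gs roots G hG _).mpr ⟨i, rfl⟩) (mem_comp.mp hr)⟩⟩
    exact (dominated_some_iff Gs roots G hG s h0 i u).mp
      (h2 (some ⟨i, u⟩) (by simp))
  · rintro ⟨h0, h⟩
    simp only [Bool.false_eq_true, iff_false] at h0
    refine ⟨h0, ?_, ?_⟩
    · intro u hadj
      rw [adj_none_iff Gs roots G hG] at hadj
      obtain ⟨i, rfl⟩ := hadj
      intro hmem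
      exact (h i).2 (mem_comp.mpr hmem)
    · intro w hw
      match w with
      | some ⟨i, u⟩ =>
        exact (dominated_some_iff Gs roots G hG s h0 i u).mpr ((h i).1 u)

lemma iff_Q_and_D (s : Finset (Option (Σ i, V i))) :
    (((none ∈ s ↔ (false : Bool) = true) ∧ ∀ i, FinsetDominating (Gs i) (comp s i)) ∧
      FinsetDominating G s) ↔ (FinsetDominating G s ∧ none ∉ s) := by
  constructor
  · rintro ⟨⟨h0, _⟩, hD⟩
    exact ⟨hD, by simpa using h0⟩
  · rintro ⟨hD, h0⟩
    refine ⟨⟨by simpa using h0, fun i u => ?_⟩, hD⟩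
    exact (dominated_some_iff Gs roots G hG s h0 i u).mp (hD (some ⟨i, u⟩))

lemma iff_Q_and_notD (s : Finset (Option (Σ i, V i))) :
    (((none ∈ s ↔ (false : Bool) = true) ∧ ∀ i, FinsetDominating (Gs i) (comp s i)) ∧
      ¬ FinsetDominating G s) ↔ FinsetDomStar G none s := by
  constructor
  · rintro ⟨⟨h0, hcomp⟩, hnD⟩
    simp only [Bool.false_eq_true, iff_false] at h0
    refine ⟨h0, ?_, ?_⟩
    · intro u hadj hu
      rw [adj_none_iff Gs roots G hG] at hadj
      obtain ⟨i, rfl⟩ := hadj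
      apply hnD
      intro w
      match w with
      | none => exact .inr ⟨some ⟨i, roots i⟩, hu,
          (adj_none_iff Gs roots G hG _).mpr ⟨i, rfl⟩⟩
      | some ⟨j, v⟩ =>
        exact (dominated_some_iff Gs roots G hG s h0 j v).mpr (hcomp j v)
    · intro w hw
      match w with
      | some ⟨i, u⟩ =>
        exact (dominated_some_iff Gs roots G hG s h0 i u).mpr (hcomp i u)
  · rintro ⟨h0, h1, h2⟩
    refine ⟨⟨by simpa using h0, fun i u => ?_⟩, ?_⟩
    · exact (dominated_some_iff Gs roots G hG s h0 i u).mp (h2 (some ⟨i, u⟩) (by simp))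
    · intro hD
      rcases hD none with h | ⟨x, hx, hadj⟩
      · exact h0 h
      · rw [adj_none_iff Gs roots G hG] at hadj
        obtain ⟨i, rfl⟩ := hadj
        exact h1 _ ((adj_none_iff Gs roots G hG _).mpr ⟨i, rfl⟩) hx

lemma iff_D_and_mem (s : Finset (Option (Σ i, V i))) :
    (FinsetDominating G s ∧ none ∈ s) ↔
      (none ∈ s ↔ (true : Bool) = true) ∧
      ∀ i, ∀ w, w ≠ roots i → (w ∈ comp s i ∨ ∃ u ∈ comp s i, (Gs i).Adj w u) := by
  constructor
  · rintro ⟨hD, h0⟩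
    refine ⟨by simpa using h0, fun i w hw => ?_⟩
    rcases hD (some ⟨i, w⟩) with h | ⟨x, hx, hadj⟩
    · exact .inl (mem_comp.mpr h)
    · rw [adj_some_iff Gs roots G hG] at hadj
      rcases hadj with ⟨u, rfl, h⟩ | ⟨h, rfl⟩
      · exact .inr ⟨u, mem_comp.mpr hx, h⟩
      · exact absurd h hw
  · rintro ⟨h0, h⟩
    simp only [iff_true] at h0
    refine ⟨?_, h0⟩
    intro w
    match w with
    | none => exact .inl h0
    | some ⟨i, u⟩ =>
      by_cases hu : u = roots i
      · subst hu
        exact .inr ⟨none, h0, (adj_some_iff Gs roots G hG i _ _).mpr (.inr ⟨rfl, rfl⟩)⟩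
      · rcases h i u hu with hm | ⟨v, hv, hadj⟩
        · exact .inl (mem_comp.mp hm)
        · exact .inr ⟨some ⟨i, v⟩, mem_comp.mp hv,
            (adj_some_iff Gs roots G hG i u _).mpr (.inl ⟨v, rfl, hadj⟩)⟩

end Adj

theorem dominating_rooted_join {k : ℕ} {V : Fin k → Type*} [∀ i, Fintype (V i)]
    (Gs : ∀ i, SimpleGraph (V i)) (roots : ∀ i, V i)
    (G : SimpleGraph (Option (Σ i, V i)))
    (hG : ∀ x y, G.Adj x y ↔ joinRel Gs roots x y) :
    numDomStar G none = ∏ i, numDom0 (Gs i) (roots i) ∧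
    numDom0 G none = ∏ i, numDom (Gs i) - ∏ i, numDom0 (Gs i) (roots i) ∧
    numDom G = numDom0 G none + ∏ i, (numDom (Gs i) + numDomStar (Gs i) (roots i)) ∧
    numDom0 G none + numDomStar G none = ∏ i, numDom (Gs i) := by
  have h1 : numDomStar G none = ∏ i, numDom0 (Gs i) (roots i) := by
    rw [numDomStar, Nat.card_congr (Equiv.subtypeEquivRight (iff_domStar Gs roots G hG)),
      master false (fun i t => FinsetDominating (Gs i) t ∧ roots i ∉ t)]
    rfl
  have hsum : numDom0 G none + numDomStar G none = ∏ i, numDom (Gs i) := by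
    have hm := master (V := V) false (fun i t => FinsetDominating (Gs i) t)
    rw [card_partition _ (fun s => FinsetDominating G s)] at hm
    rw [Nat.card_congr (Equiv.subtypeEquivRight (iff_Q_and_D Gs roots G hG))] at hm
    rw [Nat.card_congr (Equiv.subtypeEquivRight (iff_Q_and_notD Gs roots G hG))] at hm
    rw [numDom0, numDomStar, hm]
    rfl
  have h3 : numDom G = numDom0 G none +
      ∏ i, (numDom (Gs i) + numDomStar (Gs i) (roots i)) := by
    rw [numDom, card_partition _ (fun s => none ∈ s), add_comm]
    congr 1
    · rw [Nat.card_congr (Equiv.subtypeEquivRight (iff_D_and_mem Gs roots G hG)),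
        master true (fun i t => ∀ w, w ≠ roots i → (w ∈ t ∨ ∃ u ∈ t, (Gs i).Adj w u))]
      exact Finset.prod_congr rfl fun i _ => card_almost (Gs i) (roots i)
  exact ⟨h1, by omega, h3, hsum⟩
end

section
/- For every finite simple graph H and every vertex v of H, one has 2·d₀(H, v) ≤ d(H) (the number of dominating sets not containing v is at most the number containing v) and d_*(H, v) ≤ d(H). -/
theorem dom_avoiding_le_containing {V : Type*} [Fintype V] (H : SimpleGraph V) (v : V) :
    2 * numDom0 H v ≤ numDom H ∧ numDomStar H v ≤ numDom H := by
  classical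
  set S : Set (Finset V) := {s | FinsetDominating H s} with hS
  set A : Set (Finset V) := {s | FinsetDominating H s ∧ v ∉ s} with hA
  set B : Set (Finset V) := {s | FinsetDominating H s ∧ v ∈ s} with hB
  set C : Set (Finset V) := {s | FinsetDomStar H v s} with hC
  have hND : numDom H = S.ncard := rfl
  have hN0 : numDom0 H v = A.ncard := rfl
  have hNS : numDomStar H v = C.ncard := rfl
  have hALEB : A.ncard ≤ B.ncard := by
    apply Set.ncard_le_ncard_of_injOn (insert v)
    · rintro s ⟨hdom, hv⟩
      refine ⟨fun w => ?_, Finset.mem_insert_self _ _⟩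
      rcases hdom w with h | ⟨u, hu, hadj⟩
      · exact Or.inl (Finset.mem_insert_of_mem h)
      · exact Or.inr ⟨u, Finset.mem_insert_of_mem hu, hadj⟩
    · rintro s ⟨_, hs⟩ t ⟨_, ht⟩ h
      have := congrArg (Finset.erase · v) h
      simpa [Finset.erase_insert hs, Finset.erase_insert ht] using this
  have hunion : A ∪ B = S := by
    ext s
    by_cases hv : v ∈ s <;> simp [hA, hB, hS, hv]
  have hdisj : Disjoint A B := by
    rw [Set.disjoint_left]
    rintro s ⟨_, hv⟩ ⟨_, hv'⟩
    exact hv hv'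
  have hsum : A.ncard + B.ncard = S.ncard := by
    rw [← Set.ncard_union_eq hdisj (Set.toFinite A) (Set.toFinite B), hunion]
  constructor
  · rw [hN0, hND, two_mul, ← hsum]
    exact Nat.add_le_add_left hALEB _
  · rw [hNS, hND]
    apply Set.ncard_le_ncard_of_injOn (insert v)
    · rintro s ⟨hv, _, hdom⟩ w
      by_cases hw : w = v
      · exact Or.inl (hw ▸ Finset.mem_insert_self _ _)
      · rcases hdom w hw with h | ⟨u, hu, hadj⟩
        · exact Or.inl (Finset.mem_insert_of_mem h)
        · exact Or.inr ⟨u, Finset.mem_insert_of_mem hu, hadj⟩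
    · rintro s ⟨hs, _, _⟩ t ⟨ht, _, _⟩ h
      have := congrArg (Finset.erase · v) h
      simpa [Finset.erase_insert hs, Finset.erase_insert ht] using this
end

section
/- In the rooted join construction, the number of dominating sets satisfies (2/3)·∏_{i=1}^{k} d(Gᵢ) ≤ d(G) ≤ (1 + 2^k)·∏_{i=1}^{k} d(Gᵢ); in particular the toll function f(G) = log d(G) − Σ_{i=1}^{k} log d(Gᵢ) of the additive functional log d satisfies −log(3/2) ≤ f(G) ≤ log(1 + 2^k) ≤ (log 2)·k + 1, where k is the degree of the root of G. -/
lemma numDom_lower {k : ℕ} {V : Fin k → Type*} [∀ i, Fintype (V i)]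
    (Gs : ∀ i, SimpleGraph (V i)) (roots : ∀ i, V i)
    (G : SimpleGraph (Option (Σ i, V i)))
    (hG : ∀ x y, G.Adj x y ↔ joinRel Gs roots x y) :
    ∏ i, numDom (Gs i) ≤ numDom G := by
  classical
  set φ : (∀ i, {s : Finset (V i) // FinsetDominating (Gs i) s}) →
      {s : Finset (Option (Σ i, V i)) // FinsetDominating G s} := fun f =>
    ⟨insert none ((Finset.univ.sigma fun i => (f i).1).image some), by
      intro w
      match w with
      | none => exact Or.inl (Finset.mem_insert_self _ _)
      | some ⟨i, u⟩ =>
        have hmem : ∀ x : V i, x ∈ (f i).1 →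
            (some ⟨i, x⟩ : Option (Σ i, V i)) ∈
              insert none ((Finset.univ.sigma fun i => (f i).1).image some) := by
          intro x hx
          refine Finset.mem_insert_of_mem (Finset.mem_image_of_mem _ ?_)
          simpa using hx
        rcases (f i).2 u with hu | ⟨u', hu', hadj⟩
        · exact Or.inl (hmem u hu)
        · refine Or.inr ⟨some ⟨i, u'⟩, hmem u' hu', ?_⟩
          rw [hG]
          exact Or.inl ⟨i, u, u', rfl, rfl, hadj⟩⟩
  have hinj : Function.Injective φ := by
    intro f g h
    have h' := Subtype.ext_iff.mp h
    funext i
    ext u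
    have := Finset.ext_iff.mp h' (some ⟨i, u⟩)
    simpa [φ] using this
  calc ∏ i, numDom (Gs i)
      = Nat.card (∀ i, {s : Finset (V i) // FinsetDominating (Gs i) s}) := by
        rw [Nat.card_pi]; rfl
    _ ≤ numDom G := Nat.card_le_card_of_injective φ hinj

lemma numDom_upper {k : ℕ} {V : Fin k → Type*} [∀ i, Fintype (V i)]
    (Gs : ∀ i, SimpleGraph (V i)) (roots : ∀ i, V i)
    (G : SimpleGraph (Option (Σ i, V i)))
    (hG : ∀ x y, G.Adj x y ↔ joinRel Gs roots x y) :
    numDom G ≤ (2 ^ k + 1) * ∏ i, numDom (Gs i) := by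
  classical
  let tr : Finset (Option (Σ i, V i)) → ∀ i, Finset (V i) := fun D i =>
    Finset.univ.filter fun u => some ⟨i, u⟩ ∈ D
  have htr : ∀ D i (u : V i), u ∈ tr D i ↔ some ⟨i, u⟩ ∈ D := by
    intro D i u; simp [tr]
  have hadj : ∀ (i : Fin k) (u : V i) (x), G.Adj (some ⟨i, u⟩) x →
      (∃ w : V i, x = some ⟨i, w⟩ ∧ (Gs i).Adj u w) ∨ (u = roots i ∧ x = none) := by
    intro i u x h
    rw [hG] at h
    rcases h with ⟨j, u', w', hx, hy, ha⟩ | ⟨j, hx, _⟩ | ⟨j, hx, hy⟩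
    · obtain ⟨rfl, hx2⟩ := Sigma.ext_iff.mp (Option.some.inj hx)
      rw [heq_eq_eq] at hx2; subst hx2
      exact Or.inl ⟨w', hy, ha⟩
    · exact absurd hx (by simp)
    · obtain ⟨rfl, hx2⟩ := Sigma.ext_iff.mp (Option.some.inj hx)
      rw [heq_eq_eq] at hx2
      exact Or.inr ⟨hx2, hy⟩
  -- if none ∉ D, each trace is dominating
  have hdom0 : ∀ D : Finset (Option (Σ i, V i)), FinsetDominating G D → none ∉ D →
      ∀ i, FinsetDominating (Gs i) (tr D i) := by
    intro D hD hn i w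
    rcases hD (some ⟨i, w⟩) with hw | ⟨x, hx, hxa⟩
    · exact Or.inl ((htr D i w).mpr hw)
    · rcases hadj i w x hxa with ⟨w', rfl, ha⟩ | ⟨_, rfl⟩
      · exact Or.inr ⟨w', (htr D i w').mpr hx, ha⟩
      · exact absurd hx hn
  -- if none ∈ D, traces dominate everything except the roots
  have hdom1 : ∀ D : Finset (Option (Σ i, V i)), FinsetDominating G D →
      ∀ i, ∀ w : V i, w ≠ roots i →
        w ∈ tr D i ∨ ∃ u ∈ tr D i, (Gs i).Adj w u := by
    intro D hD i w hw
    rcases hD (some ⟨i, w⟩) with h | ⟨x, hx, hxa⟩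
    · exact Or.inl ((htr D i w).mpr h)
    · rcases hadj i w x hxa with ⟨w', rfl, ha⟩ | ⟨hr, rfl⟩
      · exact Or.inr ⟨w', (htr D i w').mpr hx, ha⟩
      · exact absurd hr hw
  have hins : ∀ D : Finset (Option (Σ i, V i)), FinsetDominating G D →
      ∀ i, ¬ FinsetDominating (Gs i) (tr D i) →
        roots i ∉ tr D i ∧ FinsetDominating (Gs i) (insert (roots i) (tr D i)) := by
    intro D hD i hP
    have hroot : roots i ∉ tr D i := by
      intro hc
      exact hP (fun w => by
        by_cases hw : w = roots i
        · exact Or.inl (hw ▸ hc)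
        · exact hdom1 D hD i w hw)
    refine ⟨hroot, fun w => ?_⟩
    by_cases hw : w = roots i
    · exact Or.inl (hw ▸ Finset.mem_insert_self _ _)
    · rcases hdom1 D hD i w hw with h | ⟨u, hu, ha⟩
      · exact Or.inl (Finset.mem_insert_of_mem h)
      · exact Or.inr ⟨u, Finset.mem_insert_of_mem hu, ha⟩
  -- the injection
  let ψ : {s : Finset (Option (Σ i, V i)) // FinsetDominating G s} →
      Option (Fin k → Bool) × ∀ i, {s : Finset (V i) // FinsetDominating (Gs i) s} :=
    fun D =>
      if hn : (none : Option (Σ i, V i)) ∈ D.1 then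
        (some (fun i => if FinsetDominating (Gs i) (tr D.1 i) then true else false),
         fun i =>
           if hi : FinsetDominating (Gs i) (tr D.1 i) then ⟨tr D.1 i, hi⟩
           else ⟨insert (roots i) (tr D.1 i), (hins D.1 D.2 i hi).2⟩)
      else (none, fun i => ⟨tr D.1 i, hdom0 D.1 D.2 hn i⟩)
  have hinj : Function.Injective ψ := by
    intro D E h
    have hDE : (∀ i, tr D.1 i = tr E.1 i) → ((none ∈ D.1) ↔ (none ∈ E.1)) → D = E := by
      intro ht hn
      refine Subtype.ext (Finset.ext fun x => ?_)
      match x with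
      | none => exact hn
      | some ⟨i, u⟩ =>
        have := Finset.ext_iff.mp (ht i) u
        rwa [htr, htr] at this
    by_cases hnD : (none : Option (Σ i, V i)) ∈ D.1 <;>
      by_cases hnE : (none : Option (Σ i, V i)) ∈ E.1
    · rw [show ψ D = _ from dif_pos hnD, show ψ E = _ from dif_pos hnE,
        Prod.mk.injEq] at h
      obtain ⟨h1, h2⟩ := h
      have h1 := Option.some.inj h1
      refine hDE (fun i => ?_) (iff_of_true hnD hnE)
      have h1i := congrFun h1 i
      have h2i := congrFun h2 i
      by_cases hPD : FinsetDominating (Gs i) (tr D.1 i) <;>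
        by_cases hPE : FinsetDominating (Gs i) (tr E.1 i)
      · rw [dif_pos hPD, dif_pos hPE] at h2i
        exact Subtype.ext_iff.mp h2i
      · simp [hPD, hPE] at h1i
      · simp [hPD, hPE] at h1i
      · rw [dif_neg hPD, dif_neg hPE] at h2i
        have h2i := Subtype.ext_iff.mp h2i
        have hrD := (hins D.1 D.2 i hPD).1
        have hrE := (hins E.1 E.2 i hPE).1
        ext u
        by_cases hu : u = roots i
        · subst hu; simp [hrD, hrE]
        · have := Finset.ext_iff.mp h2i u
          simpa [Finset.mem_insert, hu] using this
    · rw [show ψ D = _ from dif_pos hnD, show ψ E = _ from dif_neg hnE] at h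
      exact absurd (congrArg Prod.fst h) (by simp)
    · rw [show ψ D = _ from dif_neg hnD, show ψ E = _ from dif_pos hnE] at h
      exact absurd (congrArg Prod.fst h) (by simp)
    · rw [show ψ D = _ from dif_neg hnD, show ψ E = _ from dif_neg hnE,
        Prod.mk.injEq] at h
      refine hDE (fun i => ?_) (iff_of_false hnD hnE)
      exact Subtype.ext_iff.mp (congrFun h.2 i)
  calc numDom G
      ≤ Nat.card (Option (Fin k → Bool) ×
          ∀ i, {s : Finset (V i) // FinsetDominating (Gs i) s}) :=
        Nat.card_le_card_of_injective ψ hinj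
    _ = (2 ^ k + 1) * ∏ i, numDom (Gs i) := by
        rw [Nat.card_prod, Nat.card_pi]
        congr 1
        simp [Nat.card_eq_fintype_card]

theorem dominating_toll_bounds {k : ℕ} {V : Fin k → Type*} [∀ i, Fintype (V i)]
    (Gs : ∀ i, SimpleGraph (V i)) (roots : ∀ i, V i)
    (G : SimpleGraph (Option (Σ i, V i)))
    (hG : ∀ x y, G.Adj x y ↔ joinRel Gs roots x y) :
    ((2 / 3 : ℝ) * ∏ i, (numDom (Gs i) : ℝ) ≤ (numDom G : ℝ) ∧
      (numDom G : ℝ) ≤ (1 + 2 ^ k) * ∏ i, (numDom (Gs i) : ℝ)) ∧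
    (-Real.log (3 / 2) ≤ Real.log (numDom G) - ∑ i, Real.log (numDom (Gs i)) ∧
      Real.log (numDom G) - ∑ i, Real.log (numDom (Gs i)) ≤ Real.log (1 + 2 ^ k) ∧
      Real.log (1 + 2 ^ k) ≤ Real.log 2 * k + 1) := by
  classical
  have hlow := numDom_lower Gs roots G hG
  have hup := numDom_upper Gs roots G hG
  have hpos : ∀ i, 1 ≤ numDom (Gs i) := by
    intro i
    have : Nonempty {s : Finset (V i) // FinsetDominating (Gs i) s} :=
      ⟨⟨Finset.univ, fun w => Or.inl (Finset.mem_univ w)⟩⟩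
    exact Nat.card_pos
  set P : ℝ := ∏ i, (numDom (Gs i) : ℝ) with hP
  have hPnat : 0 < ∏ i, numDom (Gs i) := Finset.prod_pos fun i _ => hpos i
  have hP1 : (1 : ℝ) ≤ P := by
    rw [hP]
    exact_mod_cast hPnat
  have hP0 : (0 : ℝ) < P := lt_of_lt_of_le one_pos hP1
  have hlowR : P ≤ (numDom G : ℝ) := by
    rw [hP]
    exact_mod_cast hlow
  have hupR : (numDom G : ℝ) ≤ (1 + 2 ^ k) * P := by
    have : (numDom G : ℝ) ≤ ((2 ^ k + 1 : ℕ) : ℝ) * P := by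
      rw [hP]
      push_cast
      exact_mod_cast hup
    push_cast at this
    linarith
  have hd0 : (0 : ℝ) < (numDom G : ℝ) := lt_of_lt_of_le hP0 hlowR
  have hlogP : ∑ i, Real.log (numDom (Gs i)) = Real.log P := by
    rw [hP, Real.log_prod]
    intro i _
    have : (1 : ℝ) ≤ (numDom (Gs i) : ℝ) := by exact_mod_cast hpos i
    linarith
  have h23 : (2 / 3 : ℝ) * P ≤ (numDom G : ℝ) := by nlinarith
  refine ⟨⟨h23, hupR⟩, ?_, ?_, ?_⟩
  · rw [hlogP]
    have h1 : Real.log ((2 / 3 : ℝ) * P) ≤ Real.log (numDom G) :=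
      Real.log_le_log (mul_pos (by norm_num) hP0) h23
    rw [Real.log_mul (by norm_num) (ne_of_gt hP0)] at h1
    have h2 : Real.log ((2 : ℝ) / 3) = -Real.log ((3 : ℝ) / 2) := by
      rw [show ((2 : ℝ) / 3) = ((3 : ℝ) / 2)⁻¹ by norm_num, Real.log_inv]
    linarith
  · rw [hlogP]
    have h1 : Real.log (numDom G) ≤ Real.log ((1 + 2 ^ k : ℝ) * P) :=
      Real.log_le_log hd0 hupR
    rw [Real.log_mul (by positivity : (0:ℝ) < 1 + 2 ^ k).ne' (ne_of_gt hP0)] at h1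
    linarith
  · have h2k : (1 : ℝ) ≤ 2 ^ k := one_le_pow₀ (by norm_num)
    have hle : (1 : ℝ) + 2 ^ k ≤ 2 ^ (k + 1) := by
      rw [pow_succ]
      linarith
    have h1 : Real.log ((1 : ℝ) + 2 ^ k) ≤ Real.log ((2 : ℝ) ^ (k + 1)) :=
      Real.log_le_log (by positivity) hle
    rw [Real.log_pow] at h1
    have h2 : Real.log 2 ≤ 1 := by
      have := Real.log_le_sub_one_of_pos (by norm_num : (0:ℝ) < 2)
      linarith
    have h3 : (0 : ℝ) ≤ Real.log 2 := Real.log_nonneg (by norm_num)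
    push_cast at h1 ⊢
    nlinarith
end

section
/- In the rooted join construction with k ≥ 1 branches, the number of dominating sets satisfies d(G) ≤ (1 + 2^{k+1})·d₀(G, r); equivalently, the proportion of dominating sets of G avoiding the root is at least (1/2)/(1/2 + 2^k). -/
private lemma card_split {β : Type*} [Finite β] (P Q : β → Prop) :
    Nat.card {x // P x} = Nat.card {x // P x ∧ Q x} + Nat.card {x // P x ∧ ¬ Q x} := by
  classical
  cases nonempty_fintype β
  simp only [Nat.card_eq_fintype_card, Fintype.card_subtype]
  rw [← Finset.card_filter_add_card_filter_not (s := Finset.univ.filter P) Q]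
  simp [Finset.filter_filter]

theorem dominating_root_avoiding_proportion {k : ℕ} (hk : 1 ≤ k) {V : Fin k → Type*}
    [∀ i, Fintype (V i)]
    (Gs : ∀ i, SimpleGraph (V i)) (roots : ∀ i, V i)
    (G : SimpleGraph (Option (Σ i, V i)))
    (hG : ∀ x y, G.Adj x y ↔ joinRel Gs roots x y) :
    numDom G ≤ (1 + 2 ^ (k + 1)) * numDom0 G none ∧
    ((1 : ℝ) / 2) / (1 / 2 + 2 ^ k) ≤ (numDom0 G none : ℝ) / (numDom G : ℝ) := by
  classical
  let ρ : Fin k → Option (Σ i, V i) := fun i => some ⟨i, roots i⟩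
  have hρinj : Function.Injective ρ := by
    intro i j h
    exact congrArg Sigma.fst (Option.some.inj h)
  have adj_none_root : ∀ i, G.Adj none (ρ i) := fun i =>
    (hG _ _).mpr (Or.inr (Or.inl ⟨i, rfl, rfl⟩))
  have adj_to_none : ∀ w : Option (Σ i, V i), G.Adj w none → ∃ i, w = ρ i := by
    intro w hw
    rw [hG] at hw
    rcases hw with ⟨i, u, v, _, h, _⟩ | ⟨i, _, h⟩ | ⟨i, h, _⟩
    · exact absurd h (by simp)
    · exact absurd h (by simp)
    · exact ⟨i, h⟩
  -- components of the encoding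
  let Acond : Finset (Option (Σ i, V i)) → Fin k → Prop := fun s i =>
    ρ i ∉ s ∧ ∀ x ∈ s, G.Adj (ρ i) x → x = none
  let A : Finset (Option (Σ i, V i)) → Finset (Fin k) := fun s => Finset.univ.filter (Acond s)
  let ex : Finset (Option (Σ i, V i)) → Prop := fun s => A s = ∅ ∧ ∀ i, ρ i ∉ s
  let i0 : Fin k := ⟨0, hk⟩
  let X : Finset (Option (Σ i, V i)) → Finset (Option (Σ i, V i)) := fun s => (A s).image ρ ∪ (if ex s then {ρ i0} else ∅)
  let T : Finset (Option (Σ i, V i)) → Finset (Option (Σ i, V i)) := fun s => X s ∪ s.erase none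
  let Dm : Finset (Option (Σ i, V i)) → Finset (Fin (k + 1)) := fun s =>
    (A s).image Fin.castSucc ∪ (if ex s then {Fin.last k} else ∅)
  have hXnotmem : ∀ s : Finset (Option (Σ i, V i)), ∀ x ∈ X s, x ∉ s := by
    intro s x hx
    rcases Finset.mem_union.mp hx with hx | hx
    · obtain ⟨i, hi, rfl⟩ := Finset.mem_image.mp hx
      exact ((Finset.mem_filter.mp hi).2).1
    · split_ifs at hx with hex
      · rw [Finset.mem_singleton.mp hx]; exact hex.2 i0
      · simp at hx
  have hXsome : ∀ s : Finset (Option (Σ i, V i)), (none : Option (Σ i, V i)) ∉ X s := by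
    intro s hx
    rcases Finset.mem_union.mp hx with hx | hx
    · obtain ⟨i, _, h⟩ := Finset.mem_image.mp hx
      exact absurd h (by simp [ρ])
    · split_ifs at hx with hex
      · exact absurd (Finset.mem_singleton.mp hx) (by simp [ρ])
      · simp at hx
  have hTnone : ∀ s : Finset (Option (Σ i, V i)), (none : Option (Σ i, V i)) ∉ T s := by
    intro s hx
    rcases Finset.mem_union.mp hx with hx | hx
    · exact hXsome s hx
    · exact (Finset.mem_erase.mp hx).1 rfl
  have hmemT : ∀ s : Finset (Option (Σ i, V i)), ∀ x ∈ s, x ≠ none → x ∈ T s := by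
    intro s x hx hxne
    exact Finset.mem_union.mpr (Or.inr (Finset.mem_erase.mpr ⟨hxne, hx⟩))
  have hmemTA : ∀ s : Finset (Option (Σ i, V i)), ∀ i ∈ A s, ρ i ∈ T s := by
    intro s i hi
    exact Finset.mem_union.mpr (Or.inl (Finset.mem_union.mpr
      (Or.inl (Finset.mem_image_of_mem ρ hi))))
  -- domination of T s
  have hTdom : ∀ s : Finset (Option (Σ i, V i)), FinsetDominating G s → FinsetDominating G (T s) := by
    intro s hs w
    match w with
    | none =>
      by_cases hex : ex s
      · refine Or.inr ⟨ρ i0, ?_, adj_none_root i0⟩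
        refine Finset.mem_union.mpr (Or.inl (Finset.mem_union.mpr (Or.inr ?_)))
        rw [if_pos hex]
        exact Finset.mem_singleton_self _
      · rw [not_and_or] at hex
        rcases hex with hA | hr
        · obtain ⟨i, hi⟩ := Finset.nonempty_iff_ne_empty.mpr hA
          exact Or.inr ⟨ρ i, hmemTA s i hi, adj_none_root i⟩
        · push_neg at hr
          obtain ⟨i, hi⟩ := hr
          exact Or.inr ⟨ρ i, hmemT s _ hi (by simp [ρ]), adj_none_root i⟩
    | some w' =>
      rcases hs (some w') with hw | ⟨x, hx, hadj⟩
      · exact Or.inl (hmemT s _ hw (by simp))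
      · by_cases hxn : x = none
        · subst hxn
          obtain ⟨i, hwi⟩ := adj_to_none _ hadj
          rw [hwi]
          by_cases hiA : i ∈ A s
          · exact Or.inl (hmemTA s i hiA)
          · have : ¬ Acond s i := by
              intro hc
              exact hiA (Finset.mem_filter.mpr ⟨Finset.mem_univ i, hc⟩)
            replace this : ¬(ρ i ∉ s ∧ ∀ x ∈ s, G.Adj (ρ i) x → x = none) := this
            push_neg at this
            by_cases hρs : ρ i ∈ s
            · exact Or.inl (hmemT s _ hρs (by simp [ρ]))
            · obtain ⟨y, hy, hady, hyne⟩ := this hρs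
              exact Or.inr ⟨y, hmemT s _ hy hyne, hady⟩
        · exact Or.inr ⟨x, hmemT s _ hx hxn, hadj⟩
  -- recovery
  have hrecover : ∀ s : Finset (Option (Σ i, V i)), (none : Option (Σ i, V i)) ∈ s → insert (none : Option (Σ i, V i)) (T s \ X s) = s := by
    intro s hns
    have h1 : T s \ X s = s.erase none := by
      ext x
      simp only [Finset.mem_sdiff, Finset.mem_union, T]
      constructor
      · rintro ⟨hx | hx, hnx⟩
        · exact absurd hx hnx
        · exact hx
      · intro hx
        exact ⟨Or.inr hx, fun hc => hXnotmem s x hc (Finset.mem_erase.mp hx).2⟩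
    rw [h1, Finset.insert_erase hns]
  -- A and ex recoverable from Dm
  have hADm : ∀ s : Finset (Option (Σ i, V i)), ∀ i : Fin k, i ∈ A s ↔ i.castSucc ∈ Dm s := by
    intro s i
    simp only [Dm, Finset.mem_union, Finset.mem_image]
    constructor
    · intro h; exact Or.inl ⟨i, h, rfl⟩
    · rintro (⟨j, hj, hji⟩ | h)
      · rwa [← Fin.castSucc_injective k hji]
      · split_ifs at h with hex
        · exact absurd (Finset.mem_singleton.mp h) (Fin.castSucc_lt_last i).ne
        · simp at h
  have hexDm : ∀ s : Finset (Option (Σ i, V i)), ex s ↔ Fin.last k ∈ Dm s := by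
    intro s
    simp only [Dm, Finset.mem_union, Finset.mem_image]
    constructor
    · intro h
      refine Or.inr ?_
      rw [if_pos h]
      exact Finset.mem_singleton_self _
    · rintro (⟨j, _, hj⟩ | h)
      · exact absurd hj (Fin.castSucc_lt_last j).ne
      · split_ifs at h with hex
        · exact hex
        · simp at h
  -- the injection
  have key : Nat.card {s : Finset (Option (Σ i, V i)) // FinsetDominating G s ∧ (none : Option (Σ i, V i)) ∈ s}
      ≤ numDom0 G none * 2 ^ (k + 1) := by
    have hcard : numDom0 G none * 2 ^ (k + 1) =
        Nat.card ({s : Finset (Option (Σ i, V i)) // FinsetDominating G s ∧ (none : Option (Σ i, V i)) ∉ s} × Finset (Fin (k + 1))) := by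
      rw [Nat.card_prod, numDom0]
      congr 1
      simp [Nat.card_eq_fintype_card, Fintype.card_finset]
    rw [hcard]
    apply Nat.card_le_card_of_injective
      (f := fun p => (⟨T p.1, hTdom p.1 p.2.1, hTnone p.1⟩, Dm p.1))
    rintro ⟨s₁, hs₁⟩ ⟨s₂, hs₂⟩ heq
    simp only [Prod.mk.injEq, Subtype.mk.injEq] at heq
    obtain ⟨hT, hD⟩ := heq
    have hA : A s₁ = A s₂ := by
      ext i
      rw [hADm, hADm, hD]
    have hex : ex s₁ ↔ ex s₂ := by rw [hexDm, hexDm, hD]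
    have hX : X s₁ = X s₂ := by
      simp only [X, hA]
      by_cases h : ex s₁
      · rw [if_pos h, if_pos (hex.mp h)]
      · rw [if_neg h, if_neg (fun hc => h (hex.mpr hc))]
    have : s₁ = s₂ := by
      rw [← hrecover s₁ hs₁.2, ← hrecover s₂ hs₂.2, hT, hX]
    exact Subtype.ext this
  -- split numDom
  have hsplit : numDom G = Nat.card {s : Finset (Option (Σ i, V i)) // FinsetDominating G s ∧ (none : Option (Σ i, V i)) ∈ s}
      + numDom0 G none := by
    rw [numDom, numDom0]
    exact card_split _ _
  have h1 : numDom G ≤ (1 + 2 ^ (k + 1)) * numDom0 G none := by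
    rw [hsplit]
    calc Nat.card {s : Finset (Option (Σ i, V i)) // FinsetDominating G s ∧ (none : Option (Σ i, V i)) ∈ s} + numDom0 G none
        ≤ numDom0 G none * 2 ^ (k + 1) + numDom0 G none := by omega
      _ = (1 + 2 ^ (k + 1)) * numDom0 G none := by ring
  refine ⟨h1, ?_⟩
  -- numDom ≥ 1
  have hD1 : 1 ≤ numDom G := by
    rw [numDom]
    have : FinsetDominating G (Finset.univ : Finset (Option (Σ i, V i))) := fun w => Or.inl (Finset.mem_univ w)
    exact Nat.one_le_iff_ne_zero.mpr (Nat.card_ne_zero.mpr ⟨⟨⟨_, this⟩⟩, inferInstance⟩)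
  have hD0 : 1 ≤ numDom0 G none := by
    by_contra h
    push_neg at h
    have h0 : numDom0 G none = 0 := by omega
    rw [h0, Nat.mul_zero] at h1
    omega
  have hd : (numDom G : ℝ) ≤ (1 + 2 ^ (k + 1)) * (numDom0 G none : ℝ) := by
    exact_mod_cast h1
  have hdpos : (0 : ℝ) < (numDom G : ℝ) := by exact_mod_cast hD1
  have hd0pos : (0 : ℝ) < (numDom0 G none : ℝ) := by exact_mod_cast hD0
  rw [div_le_div_iff₀ (by positivity) hdpos]
  calc (1 : ℝ) / 2 * (numDom G) ≤ 1 / 2 * ((1 + 2 ^ (k + 1)) * (numDom0 G none : ℝ)) := by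
        nlinarith
    _ = (numDom0 G none : ℝ) * (1 / 2 + 2 ^ k) := by ring
end

section
/- For all real numbers Π ≥ 0 and Σ ≥ 0, one has −log((1 + Π·e^{−Σ})/(1 + Π)) ≤ (Π/(1 + Π))·Σ; in particular, if moreover Π ≤ 1, then −log((1 + Π·e^{−Σ})/(1 + Π)) ≤ Σ/2. -/
theorem neg_log_ratio_le (P S : ℝ) (hP : 0 ≤ P) (hS : 0 ≤ S) :
    -Real.log ((1 + P * Real.exp (-S)) / (1 + P)) ≤ (P / (1 + P)) * S ∧
    (P ≤ 1 → -Real.log ((1 + P * Real.exp (-S)) / (1 + P)) ≤ S / 2) := by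
  have h1P : (0:ℝ) < 1 + P := by linarith
  have hpos : ∀ s : ℝ, 0 < 1 + P * Real.exp (-s) := by
    intro s
    have := Real.exp_pos (-s)
    nlinarith
  have key : -Real.log ((1 + P * Real.exp (-S)) / (1 + P)) ≤ (P / (1 + P)) * S := by
    set f : ℝ → ℝ := fun s => P / (1 + P) * s + Real.log (1 + P * Real.exp (-s)) with hf
    have hderiv : ∀ s : ℝ, HasDerivAt f
        (P / (1 + P) + (P * (-Real.exp (-s))) / (1 + P * Real.exp (-s))) s := by
      intro s
      have h1 : HasDerivAt (fun s : ℝ => Real.exp (-s)) (-Real.exp (-s)) s := by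
        simpa using (hasDerivAt_neg s).exp
      have h2 : HasDerivAt (fun s : ℝ => 1 + P * Real.exp (-s)) (P * (-Real.exp (-s))) s := by
        simpa using (h1.const_mul P).const_add 1
      have h3 := h2.log (hpos s).ne'
      have h4 : HasDerivAt (fun s : ℝ => P / (1 + P) * s) (P / (1 + P)) s := by
        simpa using (hasDerivAt_id s).const_mul (P / (1 + P))
      exact h4.add h3
    have hmono : MonotoneOn f (Set.Ici (0:ℝ)) := by
      apply monotoneOn_of_deriv_nonneg (convex_Ici 0)
      · exact fun x _ => (hderiv x).differentiableAt.continuousAt.continuousWithinAt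
      · exact fun x _ => (hderiv x).differentiableAt.differentiableWithinAt
      · intro x hx
        rw [(hderiv x).deriv]
        have hx0 : 0 < x := by simpa using hx
        have hex : Real.exp (-x) ≤ 1 := Real.exp_le_one_iff.mpr (by linarith)
        have hexp := Real.exp_pos (-x)
        have hd : 0 < 1 + P * Real.exp (-x) := hpos x
        rw [div_add_div _ _ h1P.ne' hd.ne']
        apply div_nonneg _ (by positivity)
        nlinarith
    have h0S : f 0 ≤ f S := hmono (Set.self_mem_Ici) (Set.mem_Ici.mpr hS) hS
    have hf0 : f 0 = Real.log (1 + P) := by simp [hf]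
    have hlog : Real.log ((1 + P * Real.exp (-S)) / (1 + P)) =
        Real.log (1 + P * Real.exp (-S)) - Real.log (1 + P) :=
      Real.log_div (hpos S).ne' h1P.ne'
    rw [hlog]
    have := h0S
    rw [hf0] at this
    simp only [hf] at this
    linarith
  refine ⟨key, fun hP1 => ?_⟩
  have : (P / (1 + P)) * S ≤ S / 2 := by
    have h2 : P / (1 + P) ≤ 1 / 2 := by
      rw [div_le_div_iff₀ h1P (by norm_num)]
      linarith
    calc (P / (1 + P)) * S ≤ (1/2) * S := by
          apply mul_le_mul_of_nonneg_right h2 hS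
      _ = S / 2 := by ring
  linarith
end

section
/- Let I be a nonempty finite index set and let (ρᵢ)_{i∈I} and (τᵢ)_{i∈I} be real numbers with 0 ≤ ρᵢ ≤ 1 and τᵢ ≥ 0 for all i. Then −log((1 + Σ_{i∈I} ρᵢ·e^{−τᵢ})/(1 + Σ_{i∈I} ρᵢ)) ≤ (1/2)·Σ_{i∈I} τᵢ. -/
lemma key_prod_sum {I : Type*} (ρ x : I → ℝ) (hρ0 : ∀ i, 0 ≤ ρ i) (hρ1 : ∀ i, ρ i ≤ 1)
    (hx0 : ∀ i, 0 < x i) (hx1 : ∀ i, x i ≤ 1) (s : Finset I) :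
    (∏ i ∈ s, x i) * (1 + ∑ i ∈ s, ρ i) ≤ 1 + ∑ i ∈ s, ρ i * (x i) ^ 2 := by
  classical
  induction s using Finset.induction_on with
  | empty => simp
  | insert _ _ hj ih =>
    rename_i j t
    rw [Finset.prod_insert hj, Finset.sum_insert hj, Finset.sum_insert hj]
    have hA : (1 : ℝ) ≤ 1 + ∑ i ∈ t, ρ i * (x i) ^ 2 := by
      have : 0 ≤ ∑ i ∈ t, ρ i * (x i) ^ 2 :=
        Finset.sum_nonneg fun i _ => mul_nonneg (hρ0 i) (sq_nonneg _)
      linarith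
    have hP1 : ∏ i ∈ t, x i ≤ 1 :=
      Finset.prod_le_one (fun i _ => (hx0 i).le) (fun i _ => hx1 i)
    have hP0 : 0 < ∏ i ∈ t, x i := Finset.prod_pos fun i _ => hx0 i
    have hxj := hx0 j
    have hxj1 := hx1 j
    calc (x j * ∏ i ∈ t, x i) * (1 + (ρ j + ∑ i ∈ t, ρ i))
        = x j * ((∏ i ∈ t, x i) * (1 + ∑ i ∈ t, ρ i)) + x j * (ρ j * ∏ i ∈ t, x i) := by ring
      _ ≤ x j * (1 + ∑ i ∈ t, ρ i * (x i) ^ 2) + x j * ρ j := by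
          have h1 : x j * ((∏ i ∈ t, x i) * (1 + ∑ i ∈ t, ρ i)) ≤
              x j * (1 + ∑ i ∈ t, ρ i * (x i) ^ 2) :=
            mul_le_mul_of_nonneg_left ih hxj.le
          have h2 : x j * (ρ j * ∏ i ∈ t, x i) ≤ x j * ρ j := by
            have := mul_le_of_le_one_right (hρ0 j) hP1
            nlinarith
          linarith
      _ ≤ 1 + (ρ j * (x j) ^ 2 + ∑ i ∈ t, ρ i * (x i) ^ 2) := by
          -- x j * A + x j * ρ j ≤ A + ρ j * x j ^ 2 where A ≥ 1, ρ j * x j ≤ 1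
          have hrx : ρ j * x j ≤ 1 := by nlinarith [hρ1 j]
          nlinarith [mul_nonneg (hρ0 j) hxj.le]

theorem neg_log_sum_ratio_le {I : Type*} [Fintype I] [Nonempty I]
    (ρ τ : I → ℝ) (hρ0 : ∀ i, 0 ≤ ρ i) (hρ1 : ∀ i, ρ i ≤ 1) (hτ : ∀ i, 0 ≤ τ i) :
    -Real.log ((1 + ∑ i, ρ i * Real.exp (-τ i)) / (1 + ∑ i, ρ i)) ≤
      (1 / 2) * ∑ i, τ i := by
  set x : I → ℝ := fun i => Real.exp (-(τ i) / 2) with hx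
  have hx0 : ∀ i, 0 < x i := fun i => Real.exp_pos _
  have hx1 : ∀ i, x i ≤ 1 := fun i => Real.exp_le_one_iff.mpr (by linarith [hτ i])
  have hxsq : ∀ i, (x i) ^ 2 = Real.exp (-τ i) := by
    intro i
    rw [hx, sq, ← Real.exp_add]
    ring_nf
  have key := key_prod_sum ρ x hρ0 hρ1 hx0 hx1 Finset.univ
  simp only [hxsq] at key
  have hprod : ∏ i, x i = Real.exp (-(1 / 2) * ∑ i, τ i) := by
    rw [← Real.exp_sum]
    congr 1
    rw [Finset.mul_sum]
    exact Finset.sum_congr rfl fun i _ => by ring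
  have hS1 : (0:ℝ) < 1 + ∑ i, ρ i * Real.exp (-τ i) := by
    have : 0 ≤ ∑ i, ρ i * Real.exp (-τ i) :=
      Finset.sum_nonneg fun i _ => mul_nonneg (hρ0 i) (Real.exp_pos _).le
    linarith
  have hS2 : (0:ℝ) < 1 + ∑ i, ρ i := by
    have : 0 ≤ ∑ i, ρ i := Finset.sum_nonneg fun i _ => hρ0 i
    linarith
  rw [Real.log_div hS1.ne' hS2.ne', neg_sub]
  rw [sub_le_iff_le_add, ← Real.log_exp ((1/2) * ∑ i, τ i), ← Real.log_mul (Real.exp_pos _).ne' hS1.ne']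
  apply Real.log_le_log hS2
  rw [hprod] at key
  have h := mul_le_mul_of_nonneg_left key (Real.exp_pos ((1/2) * ∑ i, τ i)).le
  rw [← mul_assoc, ← Real.exp_add] at h
  simpa using h
end

section
/- Let I be a finite index set and let (ρᵢ)_{i∈I} and (τᵢ)_{i∈I} be real numbers with 0 ≤ ρᵢ ≤ 1/2 and τᵢ ≥ 0 for all i. Then Σ_{i∈I} log((1 + ρᵢ)/(1 + ρᵢ·e^{−τᵢ})) ≤ (1/3)·Σ_{i∈I} τᵢ. -/
open Real Set

lemma key_pointwise (ρ : ℝ) (hρ0 : 0 ≤ ρ) (hρ1 : ρ ≤ 1 / 2) {τ : ℝ} (hτ : 0 ≤ τ) :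
    Real.log ((1 + ρ) / (1 + ρ * Real.exp (-τ))) ≤ τ / 3 := by
  have hpos : ∀ t : ℝ, 0 < 1 + ρ * Real.exp (-t) := fun t => by positivity
  set f : ℝ → ℝ := fun t => t / 3 + Real.log (1 + ρ * Real.exp (-t)) with hf
  have hderiv : ∀ t : ℝ, HasDerivAt f
      (1 / 3 + (ρ * -Real.exp (-t)) / (1 + ρ * Real.exp (-t))) t := by
    intro t
    have h1 : HasDerivAt (fun t : ℝ => Real.exp (-t)) (-Real.exp (-t)) t := by
      exact ((Real.hasDerivAt_exp (-t)).comp t (hasDerivAt_neg t)).congr_deriv (by simp)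
    have h2 : HasDerivAt (fun t : ℝ => 1 + ρ * Real.exp (-t)) (ρ * -Real.exp (-t)) t :=
      ((h1.const_mul ρ).const_add 1)
    have h3 : HasDerivAt (fun t : ℝ => Real.log (1 + ρ * Real.exp (-t)))
        ((ρ * -Real.exp (-t)) / (1 + ρ * Real.exp (-t))) t :=
      h2.log (ne_of_gt (hpos t))
    have h4 : HasDerivAt (fun t : ℝ => t / 3) (1 / 3) t := by
      simpa using (hasDerivAt_id t).div_const 3
    exact h4.add h3
  have hmono : MonotoneOn f (Ici (0 : ℝ)) := by
    apply monotoneOn_of_deriv_nonneg (convex_Ici 0)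
    · exact Continuous.continuousOn (by
        fun_prop (disch := intro t; exact ne_of_gt (hpos t)))
    · intro t ht
      exact (hderiv t).differentiableAt.differentiableWithinAt
    · intro t ht
      rw [interior_Ici] at ht
      rw [(hderiv t).deriv]
      have he1 : Real.exp (-t) ≤ 1 := Real.exp_le_one_iff.mpr (by linarith [le_of_lt (mem_Ioi.mp ht)])
      have he0 : 0 < Real.exp (-t) := Real.exp_pos _
      have h2ρ : 2 * (ρ * Real.exp (-t)) ≤ 1 := by nlinarith
      have : -(1/3 : ℝ) ≤ (ρ * -Real.exp (-t)) / (1 + ρ * Real.exp (-t)) := by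
        rw [le_div_iff₀ (hpos t)]
        nlinarith
      linarith
  have h0τ := hmono (self_mem_Ici) (mem_Ici.mpr hτ) hτ
  have hf0 : f 0 = Real.log (1 + ρ) := by simp [hf]
  have hfτ : f τ = τ / 3 + Real.log (1 + ρ * Real.exp (-τ)) := rfl
  rw [Real.log_div (by linarith) (ne_of_gt (hpos τ))]
  rw [hf0, hfτ] at h0τ
  linarith

theorem sum_log_ratio_le {I : Type*} [Fintype I]
    (ρ τ : I → ℝ) (hρ0 : ∀ i, 0 ≤ ρ i) (hρ1 : ∀ i, ρ i ≤ 1 / 2) (hτ : ∀ i, 0 ≤ τ i) :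
    ∑ i, Real.log ((1 + ρ i) / (1 + ρ i * Real.exp (-τ i))) ≤ (1 / 3) * ∑ i, τ i := by
  rw [Finset.mul_sum]
  apply Finset.sum_le_sum
  intro i _
  have := key_pointwise (ρ i) (hρ0 i) (hρ1 i) (hτ i)
  linarith
end

section
/- For all real numbers Π and Σ with 0 ≤ Π ≤ 1/4 and Σ ≥ 0, one has log((1 − Π·e^{−Σ})/(1 − Π)) ≤ Σ/3. -/
theorem log_ratio_le_third (P S : ℝ) (hP0 : 0 ≤ P) (hP : P ≤ 1 / 4) (hS : 0 ≤ S) :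
    Real.log ((1 - P * Real.exp (-S)) / (1 - P)) ≤ S / 3 := by
  have h1 : (0:ℝ) < 1 - P := by linarith
  have hepos : 0 < Real.exp (-S) := Real.exp_pos _
  have hele : Real.exp (-S) ≤ 1 := Real.exp_le_one_iff.mpr (by linarith)
  have hlin : -S + 1 ≤ Real.exp (-S) := Real.add_one_le_exp (-S)
  have h2 : 0 < 1 - P * Real.exp (-S) := by nlinarith
  have hlog := Real.log_le_sub_one_of_pos (div_pos h2 h1)
  have key : (1 - P * Real.exp (-S)) / (1 - P) - 1 ≤ S / 3 := by
    rw [div_sub_one h1.ne', div_le_iff₀ h1]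
    nlinarith
  linarith
end

section
/- For all real numbers A, Π, Σ with A ≥ 1, 0 ≤ Π ≤ 1/4 and Σ ≥ 0, one has (1 − Π·e^{−Σ} + A)/(1 − Π + A) ≤ e^{Σ/7}; in particular (8 − e^{−Σ})/7 ≤ e^{Σ/7}, i.e. (7/8)·e^{Σ/7} + (1/8)·e^{−Σ} ≥ 1. -/
theorem ratio_le_exp_seventh (A P S : ℝ) (hA : 1 ≤ A) (hP0 : 0 ≤ P) (hP : P ≤ 1 / 4)
    (hS : 0 ≤ S) :
    (1 - P * Real.exp (-S) + A) / (1 - P + A) ≤ Real.exp (S / 7) ∧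
    (8 - Real.exp (-S)) / 7 ≤ Real.exp (S / 7) ∧
    1 ≤ (7 / 8) * Real.exp (S / 7) + (1 / 8) * Real.exp (-S) := by
  have hx : (1:ℝ) ≤ Real.exp (S / 7) := Real.one_le_exp (by linarith)
  set x := Real.exp (S / 7) with hxdef
  have hxpos : (0:ℝ) < x := lt_of_lt_of_le one_pos hx
  have h7 : x ^ 7 = Real.exp S := by
    rw [hxdef, ← Real.exp_nat_mul]
    norm_num
    ring
  have hx7pos : (0:ℝ) < x ^ 7 := pow_pos hxpos 7
  have hes : Real.exp (-S) = (x ^ 7)⁻¹ := by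
    rw [Real.exp_neg, h7]
  have hpoly : 8 * x ^ 7 ≤ 7 * x ^ 8 + 1 := by
    nlinarith [sq_nonneg (x - 1), pow_nonneg hxpos.le 6, pow_nonneg hxpos.le 5,
      pow_nonneg hxpos.le 4, pow_nonneg hxpos.le 3,
      mul_nonneg (sq_nonneg (x - 1)) (pow_nonneg hxpos.le 6),
      mul_nonneg (sq_nonneg (x - 1)) (pow_nonneg hxpos.le 5),
      mul_nonneg (sq_nonneg (x - 1)) (pow_nonneg hxpos.le 4),
      mul_nonneg (sq_nonneg (x - 1)) (pow_nonneg hxpos.le 3),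
      mul_nonneg (sq_nonneg (x - 1)) (pow_nonneg hxpos.le 2),
      mul_nonneg (sq_nonneg (x - 1)) hxpos.le]
  have hthird : 1 ≤ (7 / 8) * x + (1 / 8) * Real.exp (-S) := by
    rw [hes, ← sub_nonneg]
    have : (7 / 8) * x + (1 / 8) * (x ^ 7)⁻¹ - 1
        = (7 * x ^ 8 + 1 - 8 * x ^ 7) / (8 * x ^ 7) := by
      field_simp
    rw [this]
    apply div_nonneg (by linarith) (by positivity)
  refine ⟨?_, ?_, hthird⟩
  · rw [div_le_iff₀ (by linarith), hes]
    have key : x - (x ^ 7)⁻¹ ≤ 8 * (x - 1) := by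
      rw [← sub_nonneg]
      have : 8 * (x - 1) - (x - (x ^ 7)⁻¹)
          = (7 * x ^ 8 + 1 - 8 * x ^ 7) / x ^ 7 := by
        field_simp
        ring
      rw [this]
      apply div_nonneg (by linarith) (by positivity)
    have hxinv : (x ^ 7)⁻¹ ≤ x := by
      have : (1:ℝ) ≤ x ^ 7 := one_le_pow₀ hx
      calc (x ^ 7)⁻¹ ≤ 1 := inv_le_one_of_one_le₀ this
        _ ≤ x := hx
    nlinarith [mul_nonneg hP0 (sub_nonneg.2 hxinv), sub_nonneg.2 hx]
  · linarith
end
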